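/- Let X be a connected quandle, fix a ∈ X, and let ε : As(X) → ℤ send each e_x to 1. Then the set X̂ := Ker(ε) with operation g◁h := e_a⁻¹ · g · h⁻¹ · e_a · h is a quandle (satisfies the three quandle axioms). -/

import Mathlib

/-!
With `φ` the conjugation `x ↦ e_a⁻¹ x e_a`, the operation is the twisted conjugation
`g ◁ h = φ (g h⁻¹) h`. For every endomorphism `φ` of a group this operation is idempotent and
right self-distributive by a direct computation, and when `φ` is invertible the right translation
by `h` has inverse `g ↦ φ⁻¹ (g h⁻¹) h`. Since `ε` is a homomorphism to an abelian group,
`Ker ε` is closed under these operations.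
-/

/-- A quandle in the convention of the paper. -/
class PQuandle (X : Type*) where
  op : X → X → X
  op_self : ∀ a : X, op a a = a
  op_bij : ∀ a : X, Function.Bijective (fun x => op x a)
  op_distrib : ∀ a b c : X, op (op a b) c = op (op a c) (op b c)

infixl:65 " ◁ " => PQuandle.op

namespace PQuandle

variable {X : Type*} [PQuandle X]

/-- The `n`-fold right operation `x ◁ⁿ y`. -/
def opn (x : X) (n : ℕ) (y : X) : X := (fun z => z ◁ y)^[n] x

/-- The right translation `(· ◁ y)` as a permutation of `X`. -/
noncomputable def act (y : X) : Equiv.Perm X := Equiv.ofBijective _ (op_bij y)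

@[simp] lemma act_apply (y x : X) : act y x = x ◁ y := rfl

/-- The inner automorphism group `Inn(X)`. -/
noncomputable def Inn (X : Type*) [PQuandle X] : Subgroup (Equiv.Perm X) :=
  Subgroup.closure (Set.range (act (X := X)))

/-- The relators `e_{x ◁ y}⁻¹ e_y⁻¹ e_x e_y` of the adjoint group. -/
def adjRels (X : Type*) [PQuandle X] : Set (FreeGroup X) :=
  { r | ∃ x y : X,
      r = (FreeGroup.of (x ◁ y))⁻¹ * (FreeGroup.of y)⁻¹ * FreeGroup.of x * FreeGroup.of y }

/-- The adjoint (enveloping) group `As(X)` of the quandle `X`. -/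
def Adj (X : Type*) [PQuandle X] : Type _ := PresentedGroup (adjRels X)

instance : Group (Adj X) := by unfold Adj; infer_instance

/-- The generator `e_x` of `As(X)`. -/
def gen (x : X) : Adj X := PresentedGroup.of x

lemma gen_rel (x y : X) : gen (x ◁ y) = (gen y)⁻¹ * gen x * gen y := by
  have h : ((FreeGroup.of (x ◁ y))⁻¹ * (FreeGroup.of y)⁻¹ * FreeGroup.of x * FreeGroup.of y :
      FreeGroup X) ∈ Subgroup.normalClosure (adjRels X) :=
    Subgroup.subset_normalClosure ⟨x, y, rfl⟩
  have h2 : ((gen (x ◁ y))⁻¹ * (gen y)⁻¹ * gen x * gen y : Adj X) = 1 := by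
    have := (QuotientGroup.eq_one_iff
      (((FreeGroup.of (x ◁ y))⁻¹ * (FreeGroup.of y)⁻¹ * FreeGroup.of x * FreeGroup.of y :
        FreeGroup X))).mpr h
    exact this
  calc gen (x ◁ y)
      = gen (x ◁ y) * ((gen (x ◁ y))⁻¹ * (gen y)⁻¹ * gen x * gen y) := by rw [h2, mul_one]
    _ = (gen y)⁻¹ * gen x * gen y := by group

lemma act_mul_act (x y : X) : act y * act x = act (x ◁ y) * act y := by
  ext z
  simp only [Equiv.Perm.mul_apply, act_apply]
  exact op_distrib z x y

/-- The homomorphism `As(X) → Perm(X)` sending `e_y` to the inverse of the right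
translation by `y`; it encodes the right action of `As(X)` on `X`. -/
noncomputable def innHom : Adj X →* Equiv.Perm X :=
  PresentedGroup.toGroup (f := fun y : X => (act y)⁻¹) (by
    rintro r ⟨x, y, rfl⟩
    simp only [map_mul, map_inv, FreeGroup.lift_apply_of, inv_inv]
    have := act_mul_act x y
    calc act (x ◁ y) * act y * (act x)⁻¹ * (act y)⁻¹
        = (act y * act x) * (act x)⁻¹ * (act y)⁻¹ := by rw [this]
      _ = 1 := by group)

@[simp] lemma innHom_gen (y : X) : innHom (gen y) = (act y)⁻¹ :=
  PresentedGroup.toGroup.of _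

/-- The right action of `As(X)` on `X`: `x · g`. -/
noncomputable def ract (x : X) (g : Adj X) : X := (innHom g)⁻¹ x

@[simp] lemma ract_gen (x y : X) : ract x (gen y) = x ◁ y := by
  simp [ract]

lemma ract_mul (x : X) (g h : Adj X) : ract x (g * h) = ract (ract x g) h := by
  simp [ract, map_mul]

/-- A quandle is connected if the right action of `As(X)` on `X` is transitive. -/
def Connected (X : Type*) [PQuandle X] : Prop :=
  ∀ x y : X, ∃ g : Adj X, ract x g = y

/-- The homomorphism `ε : As(X) → ℤ` sending every generator `e_x` to `1`. -/
def eps : Adj X →* Multiplicative ℤ :=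
  PresentedGroup.toGroup (f := fun _ : X => Multiplicative.ofAdd 1) (by
    rintro r ⟨x, y, rfl⟩
    simp only [map_mul, map_inv, FreeGroup.lift_apply_of]
    group)

@[simp] lemma eps_gen (x : X) : eps (gen x) = Multiplicative.ofAdd 1 :=
  PresentedGroup.toGroup.of _

/-- The underlying set of the universal covering quandle: `Ker ε`. -/
def covOp (a : X) (g h : (eps (X := X)).ker) : (eps (X := X)).ker :=
  ⟨(gen a)⁻¹ * g.1 * (h.1)⁻¹ * gen a * h.1, by
    have hg : eps g.1 = 1 := g.2
    have hh : eps h.1 = 1 := h.2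
    simp only [MonoidHom.mem_ker, map_mul, map_inv, hg, hh]
    group⟩

/-- `n`-fold covering operation. -/
def covOpn (a : X) (g : (eps (X := X)).ker) (n : ℕ) (h : (eps (X := X)).ker) :
    (eps (X := X)).ker := (fun u => covOp a u h)^[n] g

/-- The right translation of the covering quandle as a permutation. -/
def covAct (a : X) (h : (eps (X := X)).ker) : Equiv.Perm (eps (X := X)).ker where
  toFun g := covOp a g h
  invFun g := ⟨gen a * g.1 * (h.1)⁻¹ * (gen a)⁻¹ * h.1, by
    have hg : eps g.1 = 1 := g.2
    have hh : eps h.1 = 1 := h.2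
    simp only [MonoidHom.mem_ker, map_mul, map_inv, hg, hh]
    group⟩
  left_inv g := by
    apply Subtype.ext
    simp only [covOp]
    group
  right_inv g := by
    apply Subtype.ext
    simp only [covOp]
    group

end PQuandle

section TwistedConjugation

variable {G : Type*} [Group G] (φ : G →* G)

def twistedOp (x y : G) : G := φ (x * y⁻¹) * y

theorem twistedOp_self (x : G) : twistedOp φ x x = x := by
  simp [twistedOp]

theorem twistedOp_twistedOp (x y z : G) :
    twistedOp φ (twistedOp φ x y) z = twistedOp φ (twistedOp φ x z) (twistedOp φ y z) := by
  simp only [twistedOp, map_mul, map_inv]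
  group

end TwistedConjugation

namespace PQuandle

variable {X : Type*} [PQuandle X]

theorem coe_covOp (a : X) (g h : (eps (X := X)).ker) :
    (covOp a g h : Adj X) = twistedOp (MulAut.conj (gen a)⁻¹).toMonoidHom g h := by
  simp only [covOp, twistedOp, MulEquiv.coe_toMonoidHom, MulAut.conj_apply, inv_inv]
  group

end PQuandle

open PQuandle in
theorem stmt14 (X : Type*) [PQuandle X] (a : X) :
    (∀ g : (eps (X := X)).ker, covOp a g g = g) ∧
    (∀ h : (eps (X := X)).ker, Function.Bijective (fun g => covOp a g h)) ∧
    (∀ g h k : (eps (X := X)).ker,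
      covOp a (covOp a g h) k = covOp a (covOp a g k) (covOp a h k)) := by
  refine ⟨fun g => ?_, fun h => (covAct a h).bijective, fun g h k => ?_⟩
  · exact Subtype.ext <| by rw [coe_covOp, twistedOp_self]
  · exact Subtype.ext <| by simp only [coe_covOp]; exact twistedOp_twistedOp _ _ _ _
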